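/- Let Zρ_Z be a cq-state and f a Boolean function. Using the Pretty Good Measurement E with elements E_z = p(z) ρ_Z^{-1/2} ρ_z ρ_Z^{-1/2}, the trace distance between f(Z)ρ_Z and U_1 ρ_Z is at most the square root of half the variational distance between f(Z)E(ρ_Z) and U E(ρ_Z), where E(ρ_Z) is the classical distribution on Z induced by measuring ρ_Z with E. -/

import Mathlib

/-!
Put `M = ½ (∑_{f z = 0} p z ρ_z − ∑_{f z = 1} p z ρ_z)`. The difference `f(Z)ρ_Z − U₁ρ_Z` is
`diag(1, −1) ⊗ M`, so the trace distance equals `‖M‖₁`. Let `S = ρ_Z` and let `W` be a sign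
matrix of `M` (`W² = 1`, `Tr (W M) = ‖M‖₁`). Cauchy–Schwarz for the Hilbert–Schmidt product,
applied to `S^{1/4} W S^{1/4}` and `S^{-1/4} M S^{-1/4}` and then once more to bound
`Tr (W √S W √S) ≤ Tr S`, gives `‖M‖₁² ≤ Tr S · Tr (S^{-1/2} M S^{-1/2} M)`. The PGM is linear
in its weights, so `∑_{z'} (-1)^{f z'} Tr (E_{z'} M) = 2 Tr (S^{-1/2} M S^{-1/2} M)`, and bounding
every term by its absolute value gives half the variational distance.
-/

open scoped Kronecker ComplexOrder
open Matrix BigOperators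
open scoped MatrixOrder

/-- Schatten-1 norm `‖A‖₁ = Tr √(AᴴA)`. -/
noncomputable def trNorm {n m : Type*} [Fintype n] [Fintype m] [DecidableEq m] (A : Matrix n m ℂ) : ℝ :=
  ((CFC.sqrt (Aᴴ * A)).trace).re

/-- Trace distance `(1/2)‖A − B‖₁`. -/
noncomputable def trDist {n : Type*} [Fintype n] [DecidableEq n] (A B : Matrix n n ℂ) : ℝ :=
  (1/2) * trNorm (A - B)

/-- `ρ` is a density matrix. -/
def IsDensity {n : Type*} [Fintype n] (ρ : Matrix n n ℂ) : Prop :=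
  ρ.PosSemidef ∧ ρ.trace = 1

/-- The Pretty Good Measurement element `E_{z'} = p(z') ρ^{-1/2} ρ_{z'} ρ^{-1/2}`. -/
noncomputable def pgm {Z : Type*} [Fintype Z] {D : ℕ} (p : Z → ℝ)
    (ρ : Z → Matrix (Fin D) (Fin D) ℂ) (h : (∑ z, (p z : ℂ) • ρ z).PosDef) (z' : Z) :
    Matrix (Fin D) (Fin D) ℂ :=
  (p z' : ℂ) • ((CFC.sqrt (∑ z, (p z : ℂ) • ρ z))⁻¹ * ρ z' * (CFC.sqrt (∑ z, (p z : ℂ) • ρ z))⁻¹)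

namespace Matrix

variable {n : Type*} [Fintype n]

lemma isHermitian_mul_mul_of_isHermitian {A B : Matrix n n ℂ} (hB : B.IsHermitian)
    (hA : A.IsHermitian) : (B * A * B).IsHermitian := by
  simpa [hB.eq] using isHermitian_conjTranspose_mul_mul B hA

lemma IsHermitian.re_trace_mul_self_nonneg {A : Matrix n n ℂ} (hA : A.IsHermitian) :
    0 ≤ (A * A).trace.re := by
  have h := (posSemidef_conjTranspose_mul_self A).trace_nonneg
  rw [hA.eq] at h
  exact (Complex.nonneg_iff.mp h).1

variable [DecidableEq n]

lemma trNorm_eq_re_trace_abs (A : Matrix n n ℂ) : trNorm A = (CFC.abs A).trace.re := rfl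

lemma IsHermitian.exists_sq_eq_one_trace_mul_eq_trNorm {J : Matrix n n ℂ} (hJ : J.IsHermitian) :
    ∃ W : Matrix n n ℂ, W.IsHermitian ∧ W * W = 1 ∧ (W * J).trace.re = trNorm J := by
  have hcont (g : ℝ → ℝ) : ContinuousOn g (spectrum ℝ J) := J.finite_real_spectrum.continuousOn g
  let sign : ℝ → ℝ := fun x => if 0 ≤ x then 1 else -1
  refine ⟨cfc sign J, (cfc_predicate sign J).isHermitian, ?_, ?_⟩
  · rw [← cfc_mul sign sign J (hcont _) (hcont _), ← cfc_one ℝ J]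
    exact cfc_congr fun x _ => by simp only [sign]; split_ifs <;> norm_num
  · have hsign : cfc (fun x => sign x * x) J = cfc (‖·‖) J :=
      cfc_congr fun x _ => by
        simp only [sign, Real.norm_eq_abs]
        split_ifs with hx
        · rw [one_mul, abs_of_nonneg hx]
        · rw [abs_of_neg (not_le.mp hx), neg_one_mul]
    rw [trNorm_eq_re_trace_abs, CFC.abs_eq_cfc_norm J hJ.isSelfAdjoint, ← hsign,
      cfc_mul sign (fun x => x) J (hcont _) (hcont _), cfc_id' ℝ J hJ.isSelfAdjoint]

lemma re_trace_mul_sq_le {A B : Matrix n n ℂ} (hA : A.IsHermitian) (hB : B.IsHermitian) :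
    (A * B).trace.re ^ 2 ≤ (A * A).trace.re * (B * B).trace.re := by
  let := toMatrixSeminormedAddCommGroup (1 : Matrix n n ℂ) PosSemidef.one
  let := toMatrixInnerProductSpace (1 : Matrix n n ℂ) PosSemidef.one
  have hinner (x y : Matrix n n ℂ) : (inner ℂ x y : ℂ) = (y * 1 * xᴴ).trace := rfl
  have h := inner_mul_inner_self_le (𝕜 := ℂ) A B
  simp only [hinner, Matrix.mul_one, hA.eq, hB.eq, trace_mul_comm B A] at h
  calc (A * B).trace.re ^ 2 ≤ ‖(A * B).trace‖ * ‖(A * B).trace‖ := by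
        rw [← sq, ← sq_abs]; gcongr; exact Complex.abs_re_le_norm _
    _ ≤ _ := h

lemma re_trace_conj_mul_le {W R : Matrix n n ℂ} (hW : W.IsHermitian) (hWW : W * W = 1)
    (hR : R.IsHermitian) : (W * R * W * R).trace.re ≤ (R * R).trace.re := by
  have hcs := re_trace_mul_sq_le (isHermitian_mul_mul_of_isHermitian hW hR) hR
  have hWRW : (W * R * W * (W * R * W)).trace = (R * R).trace := by
    rw [show W * R * W * (W * R * W) = W * (R * (W * W) * R) * W by simp only [Matrix.mul_assoc],
      hWW, Matrix.mul_one, trace_mul_comm, ← Matrix.mul_assoc, hWW, Matrix.one_mul]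
  rw [hWRW] at hcs
  nlinarith [hR.re_trace_mul_self_nonneg]

lemma trNorm_sq_le_re_trace_mul {S J : Matrix n n ℂ} (hS : S.PosDef) (hJ : J.IsHermitian) :
    trNorm J ^ 2 ≤ S.trace.re * ((CFC.sqrt S)⁻¹ * J * (CFC.sqrt S)⁻¹ * J).trace.re := by
  set R := CFC.sqrt S
  set Q := CFC.sqrt R
  have hRpos : IsStrictlyPositive R := hS.isStrictlyPositive.sqrt
  have hR : R.IsHermitian := hRpos.nonneg.posSemidef.isHermitian
  have hQ : Q.IsHermitian := (CFC.sqrt_nonneg R).posSemidef.isHermitian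
  have hRR : R * R = S := CFC.sqrt_mul_sqrt_self S hS.posSemidef.nonneg
  have hQQ : Q * Q = R := CFC.sqrt_mul_sqrt_self R hRpos.nonneg
  have hQunit : IsUnit Q.det := (isUnit_iff_isUnit_det Q).mp hRpos.sqrt.isUnit
  have hQinv : Q⁻¹ * Q⁻¹ = R⁻¹ := by rw [← hQQ, mul_inv_rev]
  obtain ⟨W, hW, hWW, hWJ⟩ := hJ.exists_sq_eq_one_trace_mul_eq_trNorm
  set A := Q * W * Q
  set Y := Q⁻¹ * J * Q⁻¹
  have hA : A.IsHermitian := isHermitian_mul_mul_of_isHermitian hQ hW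
  have hY : Y.IsHermitian := isHermitian_mul_mul_of_isHermitian hQ.inv hJ
  have hWJ_eq : (W * J).trace = (A * Y).trace := by
    have hQYQ : Q * Y * Q = J := by
      simp only [Y, ← Matrix.mul_assoc, mul_nonsing_inv Q hQunit, Matrix.one_mul]
      rw [Matrix.mul_assoc, nonsing_inv_mul Q hQunit, Matrix.mul_one]
    rw [← hQYQ, ← Matrix.mul_assoc, ← Matrix.mul_assoc, trace_mul_comm]
    simp only [A, Matrix.mul_assoc]
  have hAA : (A * A).trace = (W * R * W * R).trace := by
    calc (A * A).trace = (Q * (W * (Q * Q) * W * Q)).trace := by simp only [A, Matrix.mul_assoc]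
      _ = (W * R * W * R).trace := by
          rw [trace_mul_comm, hQQ, Matrix.mul_assoc (W * R * W) Q Q, hQQ]
  have hYY : (Y * Y).trace = (R⁻¹ * J * R⁻¹ * J).trace := by
    calc (Y * Y).trace = (Q⁻¹ * J * (Q⁻¹ * Q⁻¹) * J * Q⁻¹).trace := by
          simp only [Y, Matrix.mul_assoc]
      _ = (Q⁻¹ * (Q⁻¹ * J * (Q⁻¹ * Q⁻¹) * J)).trace := trace_mul_comm _ _
      _ = (Q⁻¹ * Q⁻¹ * J * (Q⁻¹ * Q⁻¹) * J).trace := by simp only [Matrix.mul_assoc]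
      _ = (R⁻¹ * J * R⁻¹ * J).trace := by rw [hQinv]
  have hAA_le : (A * A).trace.re ≤ S.trace.re := by
    rw [hAA, ← hRR]
    exact re_trace_conj_mul_le hW hWW hR
  calc trNorm J ^ 2 = (A * Y).trace.re ^ 2 := by rw [← hWJ, hWJ_eq]
    _ ≤ (A * A).trace.re * (Y * Y).trace.re := re_trace_mul_sq_le hA hY
    _ ≤ S.trace.re * (R⁻¹ * J * R⁻¹ * J).trace.re := by
        rw [← hYY]; gcongr; exact hY.re_trace_mul_self_nonneg

lemma trNorm_kronecker_of_conjTranspose_mul_self_eq_one {q : Type*} [Fintype q] [DecidableEq q]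
    {U : Matrix q q ℂ} (hU : Uᴴ * U = 1) (B : Matrix n n ℂ) :
    trNorm (U ⊗ₖ B) = Fintype.card q * trNorm B := by
  have hsq : star (U ⊗ₖ B) * (U ⊗ₖ B) = (1 ⊗ₖ CFC.abs B) ^ 2 := by
    rw [star_eq_conjTranspose, conjTranspose_kronecker, ← mul_kronecker_mul, hU, sq,
      ← mul_kronecker_mul, Matrix.one_mul, CFC.abs_mul_abs, star_eq_conjTranspose]
  have habs : CFC.abs (U ⊗ₖ B) = 1 ⊗ₖ CFC.abs B := by
    have hnonneg : 0 ≤ (1 : Matrix q q ℂ) ⊗ₖ CFC.abs B :=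
      (PosSemidef.one.kronecker (CFC.abs_nonneg B).posSemidef).nonneg
    rw [CFC.abs, hsq, CFC.sqrt_sq _ hnonneg]
  rw [trNorm_eq_re_trace_abs, habs, trace_kronecker, trace_one, trNorm_eq_re_trace_abs]
  simp

end Matrix

def bitSign {R : Type*} [Ring R] (b : ZMod 2) : R := if b = 0 then 1 else -1

lemma zmodTwo_eq_zero_or_eq_one (x : ZMod 2) : x = 0 ∨ x = 1 := by decide +revert

@[norm_cast]
lemma ofReal_bitSign (b : ZMod 2) : ((bitSign b : ℝ) : ℂ) = bitSign b := by
  unfold bitSign; split_ifs <;> simp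

lemma ite_sub_half_eq_bitSign_mul {K : Type*} [Field K] [CharZero K] (a b : ZMod 2) :
    (if a = b then (1 : K) else 0) - 1 / 2 = bitSign a * bitSign b / 2 := by
  rcases zmodTwo_eq_zero_or_eq_one a with rfl | rfl <;>
    rcases zmodTwo_eq_zero_or_eq_one b with rfl | rfl <;> norm_num [bitSign]

lemma sum_abs_bitSign_mul (x : ℝ) : ∑ b : ZMod 2, |bitSign b * x| = 2 * |x| := by
  have habs (b : ZMod 2) : |(bitSign b : ℝ)| = 1 := by unfold bitSign; split_ifs <;> simp
  simp [abs_mul, habs]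

lemma sum_filter_sub_half_sum {Z : Type*} [Fintype Z] (f : Z → ZMod 2) (w : Z → ℝ)
    (b : ZMod 2) :
    ∑ z ∈ Finset.univ.filter (fun z => f z = b), w z - 1 / 2 * ∑ z, w z
      = bitSign b * ∑ z, bitSign (f z) / 2 * w z := by
  rw [Finset.sum_filter, Finset.mul_sum, Finset.mul_sum, ← Finset.sum_sub_distrib]
  refine Finset.sum_congr rfl fun z _ => ?_
  have h := ite_sub_half_eq_bitSign_mul (K := ℝ) (f z) b
  split_ifs at h ⊢ <;> linear_combination w z * h

lemma single_sub_half_one (a : ZMod 2) :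
    Matrix.single a a (1 : ℂ) - (2 : ℂ)⁻¹ • 1 = (bitSign a / 2 : ℂ) • Matrix.diagonal bitSign := by
  ext b c
  simp only [Matrix.sub_apply, Matrix.smul_apply, Matrix.single_apply, Matrix.one_apply,
    Matrix.diagonal_apply, smul_eq_mul]
  by_cases hbc : b = c
  · subst hbc
    simp only [and_self, if_true, mul_one]
    linear_combination ite_sub_half_eq_bitSign_mul (K := ℂ) a b
  · simp only [hbc, if_false, mul_zero, sub_zero, ite_eq_right_iff]
    rintro ⟨rfl, rfl⟩
    exact absurd rfl hbc

lemma diagonal_bitSign_conjTranspose_mul_self :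
    (Matrix.diagonal (bitSign : ZMod 2 → ℂ))ᴴ * Matrix.diagonal bitSign = 1 := by
  rw [Matrix.diagonal_conjTranspose, Matrix.diagonal_mul_diagonal, ← Matrix.diagonal_one]
  congr 1; ext b; rcases zmodTwo_eq_zero_or_eq_one b with rfl | rfl <;> simp [bitSign]

section CQState

variable {Z : Type*} [Fintype Z] {n : Type*}

noncomputable def bias (p : Z → ℝ) (ρ : Z → Matrix n n ℂ) (f : Z → ZMod 2) : Matrix n n ℂ :=
  ∑ z, ((bitSign (f z) / 2 * p z : ℝ) : ℂ) • ρ z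

lemma bias_isHermitian (p : Z → ℝ) {ρ : Z → Matrix n n ℂ} (hρ : ∀ z, (ρ z).IsHermitian)
    (f : Z → ZMod 2) : (bias p ρ f).IsHermitian :=
  isSelfAdjoint_sum _ fun z _ => ((hρ z).smul (Complex.conj_ofReal _)).isSelfAdjoint

lemma re_trace_mul_bias [Fintype n] (X : Matrix n n ℂ) (p : Z → ℝ) (ρ : Z → Matrix n n ℂ)
    (f : Z → ZMod 2) :
    (X * bias p ρ f).trace.re = ∑ z, bitSign (f z) / 2 * (p z * (X * ρ z).trace.re) := by
  simp only [bias, Matrix.mul_sum, Matrix.mul_smul, trace_sum, trace_smul, Complex.re_sum,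
    smul_eq_mul, Complex.re_ofReal_mul, mul_assoc]

lemma sum_smul_single_kronecker_sub (p : Z → ℝ) (ρ : Z → Matrix n n ℂ) (f : Z → ZMod 2) :
    ∑ z, (p z : ℂ) • (Matrix.single (f z) (f z) (1 : ℂ) ⊗ₖ ρ z)
        - (2 : ℂ)⁻¹ • ((1 : Matrix (ZMod 2) (ZMod 2) ℂ) ⊗ₖ ∑ z, (p z : ℂ) • ρ z)
      = Matrix.diagonal bitSign ⊗ₖ bias p ρ f := by
  ext ⟨a, i⟩ ⟨b, j⟩
  simp only [bias, Matrix.sub_apply, Matrix.smul_apply, Matrix.sum_apply, kroneckerMap_apply,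
    smul_eq_mul, Finset.mul_sum, ← Finset.sum_sub_distrib]
  refine Finset.sum_congr rfl fun z _ => ?_
  have h := congr_fun₂ (single_sub_half_one (f z)) a b
  simp only [Matrix.sub_apply, Matrix.smul_apply, smul_eq_mul] at h
  push_cast
  linear_combination (p z * ρ z i j) * h

lemma trDist_eq_trNorm_bias [Fintype n] [DecidableEq n] (p : Z → ℝ) (ρ : Z → Matrix n n ℂ)
    (f : Z → ZMod 2) :
    trDist (∑ z, (p z : ℂ) • (Matrix.single (f z) (f z) (1 : ℂ) ⊗ₖ ρ z))
        ((2 : ℂ)⁻¹ • ((1 : Matrix (ZMod 2) (ZMod 2) ℂ) ⊗ₖ ∑ z, (p z : ℂ) • ρ z))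
      = trNorm (bias p ρ f) := by
  rw [trDist, sum_smul_single_kronecker_sub,
    trNorm_kronecker_of_conjTranspose_mul_self_eq_one diagonal_bitSign_conjTranspose_mul_self,
    ZMod.card]
  push_cast
  ring

lemma sum_smul_pgm {D : ℕ} (p : Z → ℝ) (ρ : Z → Matrix (Fin D) (Fin D) ℂ)
    (hpos : (∑ z, (p z : ℂ) • ρ z).PosDef) (a : Z → ℂ) :
    ∑ z, a z • pgm p ρ hpos z
      = (CFC.sqrt (∑ z, (p z : ℂ) • ρ z))⁻¹ * (∑ z, (a z * p z) • ρ z)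
          * (CFC.sqrt (∑ z, (p z : ℂ) • ρ z))⁻¹ := by
  simp only [pgm, smul_smul, Matrix.mul_sum, Matrix.sum_mul, Matrix.mul_smul, Matrix.smul_mul]

lemma re_trace_inv_sqrt_mul_bias_le {D : ℕ} (p : Z → ℝ) (ρ : Z → Matrix (Fin D) (Fin D) ℂ)
    (hpos : (∑ z, (p z : ℂ) • ρ z).PosDef) (f : Z → ZMod 2) :
    ((CFC.sqrt (∑ z, (p z : ℂ) • ρ z))⁻¹ * bias p ρ f * (CFC.sqrt (∑ z, (p z : ℂ) • ρ z))⁻¹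
        * bias p ρ f).trace.re
      ≤ 1 / 2 * ∑ z, |(pgm p ρ hpos z * bias p ρ f).trace.re| := by
  set R := CFC.sqrt (∑ z, (p z : ℂ) • ρ z)
  set M := bias p ρ f
  have hsum : ∑ z, (bitSign (f z) : ℂ) • pgm p ρ hpos z = R⁻¹ * ((2 : ℂ) • M) * R⁻¹ := by
    rw [sum_smul_pgm]
    simp only [M, bias, Finset.smul_sum]
    congr 2
    refine Finset.sum_congr rfl fun z _ => ?_
    rw [smul_smul]; push_cast; ring_nf
  have htwice : 2 * (R⁻¹ * M * R⁻¹ * M).trace.re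
      = ∑ z, bitSign (f z) * (pgm p ρ hpos z * M).trace.re := by
    have h := congr_arg (fun X => (X * M).trace.re) hsum
    simp only [Finset.sum_mul, trace_sum, Complex.re_sum, Matrix.smul_mul, Matrix.mul_smul,
      trace_smul, smul_eq_mul, ← ofReal_bitSign, Complex.re_ofReal_mul] at h
    rw [h]; simp
  have hle (z : Z) : bitSign (f z) * (pgm p ρ hpos z * M).trace.re
      ≤ |(pgm p ρ hpos z * M).trace.re| := by
    rcases zmodTwo_eq_zero_or_eq_one (f z) with h | h <;> simp [bitSign, h, le_abs_self, neg_le_abs]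
  linarith [Finset.sum_le_sum fun z (_ : z ∈ Finset.univ) => hle z]

lemma sum_abs_sum_filter_sub_half_sum {Z' : Type*} [Fintype Z'] (f : Z → ZMod 2)
    (w : Z' → Z → ℝ) :
    ∑ b : ZMod 2, ∑ z', |∑ z ∈ Finset.univ.filter (fun z => f z = b), w z' z
        - 1 / 2 * ∑ z, w z' z|
      = 2 * ∑ z', |∑ z, bitSign (f z) / 2 * w z' z| := by
  simp only [sum_filter_sub_half_sum]
  rw [Finset.sum_comm, Finset.mul_sum]
  simp only [sum_abs_bitSign_mul]

end CQState

/-- The classical joint distribution is `r(z, z') = p(z) · Tr(E_{z'} ρ_z)`; the variational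
distance compares the induced distribution of `(f z, z')` with that of `(uniform bit, z')`. -/
theorem stmt10_general {Z : Type*} [Fintype Z] (D : ℕ)
    (p : Z → ℝ) (hsum : ∑ z, p z = 1)
    (ρ : Z → Matrix (Fin D) (Fin D) ℂ) (hρ : ∀ z, IsDensity (ρ z))
    (f : Z → ZMod 2)
    (hpos : (∑ z, (p z : ℂ) • ρ z).PosDef) :
    trDist
        (∑ z, (p z : ℂ) • (Matrix.single (f z) (f z) (1:ℂ) ⊗ₖ ρ z))
        ((2:ℂ)⁻¹ • ((1 : Matrix (ZMod 2) (ZMod 2) ℂ) ⊗ₖ ∑ z, (p z : ℂ) • ρ z))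
      ≤ Real.sqrt ((1/2) * ((1/2) * ∑ b : ZMod 2, ∑ z' : Z,
          |(∑ z ∈ Finset.univ.filter (fun z => f z = b),
              p z * ((pgm p ρ hpos z' * ρ z).trace).re)
            - (1/2) * ∑ z : Z, p z * ((pgm p ρ hpos z' * ρ z).trace).re|)) := by
  have hM : (bias p ρ f).IsHermitian := bias_isHermitian p (fun z => (hρ z).1.isHermitian) f
  have htrace : (∑ z, (p z : ℂ) • ρ z).trace = 1 := by
    simp [trace_sum, (hρ _).2, ← Complex.ofReal_sum, hsum]
  rw [trDist_eq_trNorm_bias, sum_abs_sum_filter_sub_half_sum]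
  simp only [← re_trace_mul_bias]
  refine Real.le_sqrt_of_sq_le ?_
  calc trNorm (bias p ρ f) ^ 2
      ≤ (∑ z, (p z : ℂ) • ρ z).trace.re * ((CFC.sqrt (∑ z, (p z : ℂ) • ρ z))⁻¹ * bias p ρ f
          * (CFC.sqrt (∑ z, (p z : ℂ) • ρ z))⁻¹ * bias p ρ f).trace.re :=
        trNorm_sq_le_re_trace_mul hpos hM
    _ ≤ 1 / 2 * ∑ z, |(pgm p ρ hpos z * bias p ρ f).trace.re| := by
        rw [htrace, Complex.one_re, one_mul]
        exact re_trace_inv_sqrt_mul_bias_le p ρ hpos f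
    _ = _ := by ring

/-- Lemma 5.4: the trace distance of `f(Z)ρ_Z` from `U₁ρ_Z` is at most the
square root of half the variational distance of the classical joint distribution obtained
from the Pretty Good Measurement. The joint distribution is
`r(z, z') = p(z)·Tr(E_{z'} ρ_z)`, and the variational distance compares the induced
distribution of `(f(z), z')` with `(uniform bit, z')`. -/
theorem stmt10 {Z : Type*} [Fintype Z] [DecidableEq Z] (D : ℕ)
    (p : Z → ℝ) (hp : ∀ z, 0 ≤ p z) (hsum : ∑ z, p z = 1)
    (ρ : Z → Matrix (Fin D) (Fin D) ℂ) (hρ : ∀ z, IsDensity (ρ z))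
    (f : Z → ZMod 2)
    (hpos : (∑ z, (p z : ℂ) • ρ z).PosDef) :
    trDist
        (∑ z, (p z : ℂ) • (Matrix.single (f z) (f z) (1:ℂ) ⊗ₖ ρ z))
        ((2:ℂ)⁻¹ • ((1 : Matrix (ZMod 2) (ZMod 2) ℂ) ⊗ₖ ∑ z, (p z : ℂ) • ρ z))
      ≤ Real.sqrt ((1/2) * ((1/2) * ∑ b : ZMod 2, ∑ z' : Z,
          |(∑ z ∈ Finset.univ.filter (fun z => f z = b),
              p z * ((pgm p ρ hpos z' * ρ z).trace).re)
            - (1/2) * ∑ z : Z, p z * ((pgm p ρ hpos z' * ρ z).trace).re|)) :=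
  stmt10_general D p hsum ρ hρ f hpos
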